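/- arXiv:1906.11071 — 2 statements merged into one kernel-verified Lean document; each statement's English description precedes it below -/
import Mathlib

section
/- Let l ∈ ℕ, let a, b ∈ A_l be two distinct elements, and let 0 < ε < (1/16)·min{μ_l(a), μ_l(b)}. Then there exists an integer m ≥ ∏_{i=0}^{l−1} α_i such that for every Borel set B ⊆ 𝒜 with μ(B) > 1 − ε one has f^m(B) ∩ B ≠ ∅. -/
/-!
Write `N = ∏_{i<l} α_i` and assume `a < b`. The power `f^N` adds one at digit `l` and carries
to the right, so `f^(N (b - a))` changes a point with digit `a` at position `l` only by turning
that digit into `b`: on `{x | x l = a}` it agrees with the map `T` swapping the values `a` and `b`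
of digit `l`. Comparing product weights on cylinders gives
`μ_l(b) μ(S) = μ_l(a) μ(T⁻¹ S)` for `S ⊆ {x | x l = a}`. If `f^m(B) ∩ B = ∅`, then
`T⁻¹(B ∩ {x | x l = a})` lies in `Bᶜ`, whence `μ_l(a) μ_l(b) ≤ (μ_l(a) + μ_l(b)) μ(Bᶜ)`, which is
impossible once `μ(Bᶜ) < ε < min (μ_l(a), μ_l(b)) / 16`.
-/

open MeasureTheory Filter Set Topology ENNReal NNReal

noncomputable section

/-- The odometer (the "+1" map, with carry over to the right) on `Π i, Fin (α i)`. -/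
def odometer (α : ℕ → ℕ) (x : ∀ i, Fin (α i)) : ∀ i, Fin (α i) :=
  fun i =>
    if ∀ j < i, ((x j : ℕ) + 1 = α j)
    then ⟨((x i : ℕ) + 1) % α i, Nat.mod_lt _ (x i).pos⟩
    else x i

/-- Topological transitivity of a self-map of a topological space. -/
def TopTransitive {X : Type*} [TopologicalSpace X] (T : X → X) : Prop :=
  ∀ U V : Set X, IsOpen U → IsOpen V → U.Nonempty → V.Nonempty →
    ∃ k : ℕ, 1 ≤ k ∧ (T^[k] '' U ∩ V).Nonempty

/-- Topological mixing of a self-map of a topological space. -/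
def TopMixing {X : Type*} [TopologicalSpace X] (T : X → X) : Prop :=
  ∀ U V : Set X, IsOpen U → IsOpen V → U.Nonempty → V.Nonempty →
    ∃ k₀ : ℕ, 1 ≤ k₀ ∧ ∀ k ≥ k₀, (T^[k] '' U ∩ V).Nonempty

/-- `μ` is the product of the probability measures on the coordinates `Fin (α i)` given by
the weights `w i`: every basic cylinder has measure the product of the weights. -/
def IsProductMeasure (α : ℕ → ℕ) (w : ∀ i, Fin (α i) → NNReal)
    (μ : Measure (∀ i, Fin (α i))) : Prop :=
  ∀ (n : ℕ) (a : ∀ i : Fin n, Fin (α i.1)),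
    μ {x | ∀ i : Fin n, x i.1 = a i} = ∏ i : Fin n, (w i.1 (a i) : ENNReal)

/-- Condition (*): there is `c > 0` with `μ B ≥ c • μ (g ⁻¹ B)` for all measurable `B`. -/
def CondStar {X : Type*} [MeasurableSpace X] (μ : Measure X) (g : X → X) : Prop :=
  ∃ c : ℝ, 0 < c ∧ ∀ B : Set X, MeasurableSet B →
    ENNReal.ofReal c * μ (g ⁻¹' B) ≤ μ B

theorem mul_le_add_mul_measure_compl {X : Type*} [MeasurableSpace X] {μ : Measure X}
    {T : X → X} {B C : Set X} {p q : ℝ≥0∞} (hB : MeasurableSet B) (hC : MeasurableSet C)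
    (hp : p ≤ μ C) (hT : ∀ S, MeasurableSet S → S ⊆ C → q * μ S = p * μ (T ⁻¹' S))
    (hdisj : Disjoint (T ⁻¹' (B ∩ C)) B) :
    p * q ≤ (p + q) * μ Bᶜ :=
  calc p * q ≤ q * (μ (B ∩ C) + μ Bᶜ) := by
        rw [mul_comm]
        gcongr
        calc p ≤ μ C := hp
          _ ≤ μ (C ∩ B) + μ (C \ B) := measure_le_inter_add_sdiff _ _ _
          _ ≤ μ (B ∩ C) + μ Bᶜ := by
            rw [Set.inter_comm]
            gcongr
            exact Set.sdiff_subset_compl _ _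
    _ = p * μ (T ⁻¹' (B ∩ C)) + q * μ Bᶜ := by
        rw [mul_add, hT _ (hB.inter hC) Set.inter_subset_right]
    _ ≤ p * μ Bᶜ + q * μ Bᶜ := by
        gcongr
        exact hdisj.subset_compl_right
    _ = (p + q) * μ Bᶜ := (add_mul _ _ _).symm

theorem measureReal_compl_lt_of_ofReal_one_sub_lt {X : Type*} [MeasurableSpace X]
    {μ : Measure X} [IsProbabilityMeasure μ] {B : Set X} {ε : ℝ} (hB : MeasurableSet B)
    (h : ENNReal.ofReal (1 - ε) < μ B) : μ.real Bᶜ < ε := by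
  rw [probReal_compl_eq_one_sub hB]
  rcases le_or_gt 0 (1 - ε) with hε | hε
  · have := (ENNReal.ofReal_lt_iff_lt_toReal hε (measure_ne_top μ B)).1 h
    rw [measureReal_def]
    linarith
  · linarith [measureReal_nonneg (μ := μ) (s := B)]

section Digits

variable {α : ℕ → ℕ}

variable (α) in
def odometerFrom (l : ℕ) (x : ∀ i, Fin (α i)) : ∀ i, Fin (α i) :=
  fun i =>
    if l ≤ i ∧ ∀ j, l ≤ j → j < i → (x j : ℕ) + 1 = α j
    then ⟨((x i : ℕ) + 1) % α i, Nat.mod_lt _ (x i).pos⟩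
    else x i

variable (α) in
theorem odometerFrom_zero : odometerFrom α 0 = odometer α := by
  funext x i
  simp [odometerFrom, odometer]

theorem odometerFrom_apply_of_lt {l i : ℕ} (x : ∀ i, Fin (α i)) (hi : i < l) :
    odometerFrom α l x i = x i :=
  if_neg fun h => absurd h.1 (by omega)

theorem odometerFrom_apply_congr {l i : ℕ} {x y : ∀ i, Fin (α i)}
    (hxy : ∀ j, l ≤ j → x j = y j) (hi : l ≤ i) :
    odometerFrom α l x i = odometerFrom α l y i := by
  simp +contextual [odometerFrom, hxy, hi]

theorem odometerFrom_update_of_lt {l j : ℕ} (hj : j < l) (x : ∀ i, Fin (α i)) (v : Fin (α j)) :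
    odometerFrom α l (Function.update x j v) = Function.update (odometerFrom α l x) j v := by
  funext i
  rcases lt_or_ge i l with hi | hi
  · rcases eq_or_ne i j with rfl | hij
    · simp [odometerFrom_apply_of_lt _ hi]
    · simp [odometerFrom_apply_of_lt _ hi, hij]
  · rw [Function.update_of_ne (by omega)]
    exact odometerFrom_apply_congr (fun k hk => Function.update_of_ne (by omega) _ _) hi

theorem odometerFrom_of_lt {l : ℕ} {x : ∀ i, Fin (α i)} (h : (x l : ℕ) + 1 < α l) :
    odometerFrom α l x = Function.update x l ⟨(x l : ℕ) + 1, h⟩ := by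
  funext i
  rcases lt_trichotomy i l with hi | rfl | hi
  · rw [Function.update_of_ne hi.ne, odometerFrom_apply_of_lt _ hi]
  · rw [odometerFrom, if_pos ⟨le_rfl, fun j hj hji => by omega⟩]
    simp [Nat.mod_eq_of_lt h]
  · rw [Function.update_of_ne hi.ne', odometerFrom, if_neg fun hc => by
      have := hc.2 l le_rfl hi; omega]

theorem iterate_odometerFrom_of_lt {l c : ℕ} {x : ∀ i, Fin (α i)} (h : (x l : ℕ) + c < α l) :
    (odometerFrom α l)^[c] x = Function.update x l ⟨(x l : ℕ) + c, h⟩ := by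
  induction c with
  | zero => simp
  | succ c ih =>
    rw [Function.iterate_succ_apply', ih (by omega), odometerFrom_of_lt (by simp; omega)]
    simp [add_assoc]

theorem odometerFrom_of_eq {l : ℕ} {x : ∀ i, Fin (α i)} (h : (x l : ℕ) + 1 = α l) :
    odometerFrom α l x = Function.update (odometerFrom α (l + 1) x) l ⟨0, (x l).pos⟩ := by
  funext i
  rcases lt_trichotomy i l with hi | rfl | hi
  · rw [Function.update_of_ne hi.ne, odometerFrom_apply_of_lt _ hi,
      odometerFrom_apply_of_lt _ (by omega)]
  · rw [odometerFrom, if_pos ⟨le_rfl, fun j hj hji => by omega⟩]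
    simp [h]
  · rw [Function.update_of_ne hi.ne']
    simp only [odometerFrom]
    congr 1
    refine propext ⟨fun ⟨_, hc⟩ => ⟨hi, fun j hj => hc j (by omega)⟩,
      fun ⟨_, hc⟩ => ⟨hi.le, fun j hj hji => ?_⟩⟩
    rcases hj.eq_or_lt with rfl | hj
    · exact h
    · exact hc j hj hji

theorem iterate_odometerFrom_card (l : ℕ) :
    (odometerFrom α l)^[α l] = odometerFrom α (l + 1) := by
  funext x
  set y := odometerFrom α (l + 1) x
  have hx := (x l).isLt
  have htop : (x l : ℕ) + (α l - 1 - x l) < α l := by omega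
  have hy : y l = x l := odometerFrom_apply_of_lt x (by omega)
  calc (odometerFrom α l)^[α l] x
      = (odometerFrom α l)^[x l] (odometerFrom α l
          ((odometerFrom α l)^[α l - 1 - x l] x)) := by
        rw [← Function.iterate_succ_apply, ← Function.iterate_add_apply]
        congr 1
        omega
    _ = (odometerFrom α l)^[x l] (Function.update y l ⟨0, (x l).pos⟩) := by
        rw [iterate_odometerFrom_of_lt htop, odometerFrom_of_eq (by simp; omega),
          odometerFrom_update_of_lt (by omega), Function.update_idem]
    _ = y := by
        rw [iterate_odometerFrom_of_lt (by simp), Function.update_idem]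
        simp [← hy]

variable (α) in
theorem iterate_odometer_prod_range (l : ℕ) :
    (odometer α)^[∏ i ∈ Finset.range l, α i] = odometerFrom α l := by
  induction l with
  | zero => simp [odometerFrom_zero]
  | succ l ih =>
    rw [Finset.prod_range_succ, Function.iterate_mul, ih, iterate_odometerFrom_card]

end Digits

section Cylinders

variable {α : ℕ → ℕ}

variable (α) in
def prefixCylinder (n : ℕ) (v : ∀ i : Fin n, Fin (α i)) : Set (∀ i, Fin (α i)) :=
  {x | ∀ i : Fin n, x i = v i}

-- Longer than `l`, so that each of them fixes digit `l`: it lies in `{x | x l = c}` or is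
-- disjoint from it.
variable (α) in
def prefixCylinders (l : ℕ) : Set (Set (∀ i, Fin (α i))) :=
  {S | ∃ n v, l < n ∧ S = prefixCylinder α n v}

theorem measurableSet_prefixCylinder (n : ℕ) (v : ∀ i : Fin n, Fin (α i)) :
    MeasurableSet (prefixCylinder α n v) := by
  simp only [prefixCylinder, Set.ofPred_forall]
  exact .iInter fun i => measurableSet_eq_fun (measurable_pi_apply _) measurable_const

theorem measurableSet_setOf_apply_eq (j : ℕ) (c : Fin (α j)) :
    MeasurableSet {x : ∀ i, Fin (α i) | x j = c} :=
  measurableSet_eq_fun (measurable_pi_apply j) measurable_const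

theorem prefixCylinder_subset_of_inter_nonempty {n n' : ℕ} (h : n ≤ n')
    {v : ∀ i : Fin n, Fin (α i)} {v' : ∀ i : Fin n', Fin (α i)}
    (hne : (prefixCylinder α n v ∩ prefixCylinder α n' v').Nonempty) :
    prefixCylinder α n' v' ⊆ prefixCylinder α n v := by
  obtain ⟨x, hx, hx'⟩ := hne
  intro y hy i
  rw [hy ⟨i, by omega⟩, ← hx' ⟨i, by omega⟩, hx i]

theorem isPiSystem_prefixCylinders (l : ℕ) : IsPiSystem (prefixCylinders α l) := by
  rintro _ ⟨n, v, hn, rfl⟩ _ ⟨n', v', hn', rfl⟩ hne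
  rcases le_total n n' with h | h
  · exact ⟨n', v', hn', Set.inter_eq_right.2 (prefixCylinder_subset_of_inter_nonempty h hne)⟩
  · rw [Set.inter_comm] at hne ⊢
    exact ⟨n, v, hn, Set.inter_eq_right.2 (prefixCylinder_subset_of_inter_nonempty h hne)⟩

theorem setOf_apply_eq_iUnion (j : ℕ) (c : Fin (α j)) :
    {x : ∀ i, Fin (α i) | x j = c} =
      ⋃ v : ∀ i : Fin j, Fin (α i), prefixCylinder α (j + 1) (Fin.snoc v c) := by
  ext x
  simp only [prefixCylinder, Set.mem_ofPred_eq, Set.mem_iUnion, Fin.forall_fin_succ']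
  refine ⟨fun hx => ⟨fun i => x i, fun i => by simp, by simpa using hx⟩, ?_⟩
  rintro ⟨v, -, hx⟩
  simpa using hx

theorem measurableSpace_pi_eq_generateFrom_prefixCylinders (l : ℕ) :
    (MeasurableSpace.pi : MeasurableSpace (∀ i, Fin (α i))) =
      .generateFrom (prefixCylinders α l) := by
  refine le_antisymm (iSup_le fun i => ?_) (MeasurableSpace.generateFrom_le ?_)
  · let m : MeasurableSpace (∀ i, Fin (α i)) := .generateFrom (prefixCylinders α l)
    have hprefix : Measurable[m] fun (x : ∀ i, Fin (α i)) (k : Fin (max i l + 1)) => x k := by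
      refine measurable_to_countable' fun v => MeasurableSpace.measurableSet_generateFrom
        ⟨_, v, by omega, ?_⟩
      ext x
      simp [prefixCylinder, funext_iff]
    exact measurable_iff_comap_le.1 ((measurable_pi_apply (⟨i, by omega⟩ : Fin _)).comp hprefix)
  · rintro _ ⟨n, v, -, rfl⟩
    exact measurableSet_prefixCylinder n v

end Cylinders

def swapAt {α : ℕ → ℕ} (l : ℕ) (a b : Fin (α l)) (x : ∀ i, Fin (α i)) : ∀ i, Fin (α i) :=
  Function.update x l (Equiv.swap a b (x l))

section SwapAt

variable {α : ℕ → ℕ} {l : ℕ} {a b : Fin (α l)}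

@[simp]
theorem swapAt_swapAt (x : ∀ i, Fin (α i)) : swapAt l a b (swapAt l a b x) = x := by
  simp [swapAt]

theorem measurable_swapAt : Measurable (swapAt l a b) :=
  measurable_update'.comp
    (measurable_id.prodMk ((measurable_of_countable _).comp (measurable_pi_apply l)))

theorem preimage_swapAt_setOf_apply_eq :
    swapAt l a b ⁻¹' {x | x l = a} = {x | x l = b} := by
  ext x
  simp [swapAt, Equiv.swap_apply_eq_iff]

theorem preimage_swapAt_prefixCylinder {n : ℕ} (hn : l < n) {v : ∀ i : Fin n, Fin (α i)}
    (hv : v ⟨l, hn⟩ = a) :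
    swapAt l a b ⁻¹' prefixCylinder α n v = prefixCylinder α n (Function.update v ⟨l, hn⟩ b) := by
  ext x
  simp only [prefixCylinder, Set.mem_preimage, Set.mem_ofPred_eq, swapAt]
  refine forall_congr' fun i => ?_
  rcases eq_or_ne i ⟨l, hn⟩ with rfl | hi
  · simp [hv, Equiv.swap_apply_eq_iff]
  · have hil : (i : ℕ) ≠ l := fun h => hi (Fin.ext h)
    simp [hi, hil]

theorem iterate_odometer_eq_swapAt (hab : a < b) {x : ∀ i, Fin (α i)} (hx : x l = a) :
    (odometer α)^[(∏ i ∈ Finset.range l, α i) * ((b : ℕ) - a)] x = swapAt l a b x := by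
  have hb := b.isLt
  rw [Function.iterate_mul, iterate_odometer_prod_range,
    iterate_odometerFrom_of_lt (by rw [hx]; omega), swapAt]
  congr 1
  ext
  simp only [hx, Equiv.swap_apply_left]
  omega

end SwapAt

namespace IsProductMeasure

open Function

variable {α : ℕ → ℕ} {w : ∀ i, Fin (α i) → ℝ≥0} {μ : Measure (∀ i, Fin (α i))}

theorem isProbabilityMeasure (hμ : IsProductMeasure α w μ) : IsProbabilityMeasure μ :=
  ⟨by simpa using hμ 0 finZeroElim⟩

theorem measure_prefixCylinder (hμ : IsProductMeasure α w μ) (n : ℕ)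
    (v : ∀ i : Fin n, Fin (α i)) :
    μ (prefixCylinder α n v) = ∏ i : Fin n, (w i (v i) : ℝ≥0∞) :=
  hμ n v

theorem measure_setOf_apply_eq (hμ : IsProductMeasure α w μ) (hw_sum : ∀ i, ∑ j, w i j = 1)
    (j : ℕ) (c : Fin (α j)) : μ {x | x j = c} = w j c := by
  have hdisj : Pairwise (Disjoint on fun v : ∀ i : Fin j, Fin (α i) =>
      prefixCylinder α (j + 1) (Fin.snoc v c)) := by
    intro v v' hvv'
    refine Set.disjoint_left.2 fun x hx hx' => hvv' (funext fun i => ?_)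
    simpa using (hx i.castSucc).symm.trans (hx' i.castSucc)
  rw [setOf_apply_eq_iUnion, measure_iUnion hdisj fun v => measurableSet_prefixCylinder _ _,
    tsum_fintype]
  simp only [hμ.measure_prefixCylinder, Fin.prod_univ_castSucc, Fin.snoc_castSucc, Fin.snoc_last,
    Fin.val_castSucc, Fin.val_last]
  rw [← Finset.sum_mul, ← Fintype.prod_sum fun (i : Fin j) (k : Fin (α i)) => (w i k : ℝ≥0∞)]
  simp [← ENNReal.ofNNReal_finsetSum, hw_sum]

theorem mul_measure_eq_mul_measure_preimage_swapAt (hμ : IsProductMeasure α w μ)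
    (hw_sum : ∀ i, ∑ j, w i j = 1) {l : ℕ} (a b : Fin (α l)) {S : Set (∀ i, Fin (α i))}
    (hS : MeasurableSet S) (hSa : S ⊆ {x | x l = a}) :
    w l b * μ S = w l a * μ (swapAt l a b ⁻¹' S) := by
  have := hμ.isProbabilityMeasure
  have hext : w l b • μ.restrict {x | x l = a} =
      w l a • (μ.map (swapAt l a b)).restrict {x | x l = a} := by
    refine ext_of_generate_finite _ (measurableSpace_pi_eq_generateFrom_prefixCylinders l)
      (isPiSystem_prefixCylinders l) ?_ ?_
    · rintro _ ⟨n, v, hn, rfl⟩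
      simp only [Measure.smul_apply, Measure.restrict_apply (measurableSet_prefixCylinder n v),
        ENNReal.smul_def, smul_eq_mul]
      by_cases hv : v ⟨l, hn⟩ = a
      · have hsub : prefixCylinder α n v ⊆ {x | x l = a} := fun x hx => (hx ⟨l, hn⟩).trans hv
        rw [Set.inter_eq_left.2 hsub, Measure.map_apply measurable_swapAt
          (measurableSet_prefixCylinder n v), preimage_swapAt_prefixCylinder hn hv,
          hμ.measure_prefixCylinder, hμ.measure_prefixCylinder,
          Fintype.prod_eq_mul_prod_compl ⟨l, hn⟩, Fintype.prod_eq_mul_prod_compl ⟨l, hn⟩,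
          Function.update_self, hv, mul_left_comm]
        congr 2
        refine Finset.prod_congr rfl fun i hi => ?_
        rw [Function.update_of_ne (by simpa using hi)]
      · have hempty : prefixCylinder α n v ∩ {x | x l = a} = ∅ :=
          Set.eq_empty_of_forall_notMem fun x ⟨hx, hxa⟩ => hv ((hx ⟨l, hn⟩).symm.trans hxa)
        simp [hempty]
    · simp only [Measure.smul_apply, Measure.restrict_apply_univ, ENNReal.smul_def, smul_eq_mul,
        Measure.map_apply measurable_swapAt (measurableSet_setOf_apply_eq l a),
        preimage_swapAt_setOf_apply_eq, hμ.measure_setOf_apply_eq hw_sum]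
      exact mul_comm _ _
  have hS' := congr($hext S)
  simp only [Measure.smul_apply, Measure.restrict_apply hS, Set.inter_eq_left.2 hSa,
    Measure.map_apply measurable_swapAt hS, ENNReal.smul_def, smul_eq_mul] at hS'
  exact hS'

end IsProductMeasure

theorem exists_iterate_image_inter_nonempty_of_two_points_general
    (α : ℕ → ℕ)
    (w : ∀ i, Fin (α i) → NNReal)
    (hw_sum : ∀ i, ∑ j, w i j = 1)
    (μ : Measure (∀ i, Fin (α i))) (hμ : IsProductMeasure α w μ)
    (l : ℕ) (a b : Fin (α l)) (hab : a ≠ b)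
    (ε : ℝ) (hε' : ε < (1 / 16) * min ((w l a : ℝ)) ((w l b : ℝ))) :
    ∃ m : ℕ, (∏ i ∈ Finset.range l, α i) ≤ m ∧
      ∀ B : Set (∀ i, Fin (α i)), MeasurableSet B → ENNReal.ofReal (1 - ε) < μ B →
        ((odometer α)^[m] '' B ∩ B).Nonempty := by
  wlog hlt : a < b generalizing a b
  · exact this b a hab.symm (by rwa [min_comm]) (lt_of_le_of_ne (not_lt.1 hlt) hab.symm)
  have := hμ.isProbabilityMeasure
  refine ⟨(∏ i ∈ Finset.range l, α i) * ((b : ℕ) - a), Nat.le_mul_of_pos_right _ (by omega),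
    fun B hB hμB => Set.not_disjoint_iff_nonempty_inter.1 fun hdisj => ?_⟩
  have hswap : Disjoint (swapAt l a b ⁻¹' (B ∩ {x | x l = a})) B :=
    Set.disjoint_left.2 fun x ⟨hxB, hxa⟩ hx => Set.disjoint_left.1 hdisj
      ⟨_, hxB, by rw [iterate_odometer_eq_swapAt hlt hxa, swapAt_swapAt]⟩ hx
  have key := mul_le_add_mul_measure_compl hB (measurableSet_setOf_apply_eq l a)
    (hμ.measure_setOf_apply_eq hw_sum l a).ge
    (fun _ => hμ.mul_measure_eq_mul_measure_preimage_swapAt hw_sum a b) hswap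
  have hreal : (w l a : ℝ) * w l b ≤ (w l a + w l b) * μ.real Bᶜ := by
    simpa [measureReal_def, ENNReal.toReal_add] using ENNReal.toReal_mono (by finiteness) key
  have hcompl := measureReal_compl_lt_of_ofReal_one_sub_lt hB hμB
  -- `0 ≤ μ(Bᶜ) < ε` makes `ε` positive, and then `(w_a + w_b) ε < w_a w_b / 8`.
  nlinarith [measureReal_nonneg (μ := μ) (s := Bᶜ), min_le_left (w l a : ℝ) (w l b),
    min_le_right (w l a : ℝ) (w l b), (w l a).2, (w l b).2]

/-- If `a ≠ b` in `A_l` and `0 < ε < (1/16)·min{μ_l(a), μ_l(b)}`, then there is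
`m ≥ ∏_{i<l} α_i` such that `f^m(B) ∩ B ≠ ∅` for every Borel `B` with `μ(B) > 1 - ε`. -/
theorem exists_iterate_image_inter_nonempty_of_two_points
    (α : ℕ → ℕ) (hα : ∀ i, 2 ≤ α i)
    (w : ∀ i, Fin (α i) → NNReal)
    (hw_pos : ∀ i j, 0 < w i j) (hw_sum : ∀ i, ∑ j, w i j = 1)
    (μ : Measure (∀ i, Fin (α i))) (hμ : IsProductMeasure α w μ)
    (l : ℕ) (a b : Fin (α l)) (hab : a ≠ b)
    (ε : ℝ) (hε : 0 < ε) (hε' : ε < (1 / 16) * min ((w l a : ℝ)) ((w l b : ℝ))) :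
    ∃ m : ℕ, (∏ i ∈ Finset.range l, α i) ≤ m ∧
      ∀ B : Set (∀ i, Fin (α i)), MeasurableSet B → ENNReal.ofReal (1 - ε) < μ B →
        ((odometer α)^[m] '' B ∩ B).Nonempty :=
  exists_iterate_image_inter_nonempty_of_two_points_general α w hw_sum μ hμ l a b hab ε hε'
end
end

section
/- Let (X, 𝒮, μ) be a finite measure space and let g : X → X be an injective bimeasurable transformation satisfying Condition (*). Then the composition operator T_g : L^p(μ) → L^p(μ) is topologically mixing if and only if for each ε > 0 there exist an integer k_0 ≥ 1 and measurable sets {B_k}_{k=k_0}^∞ such that μ(X \ B_k) < ε and B_k ∩ g^k(B_k) = ∅ for every k ≥ k_0. -/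
/-!
If `T` is mixing, pick `u` close to `1` with `T^k u = u ∘ g^k` close to `-1`. By Chebyshev's
inequality `B = {u > 0} ∩ g^{-k} {u < 0}` has small complement, and `B` misses `g^k(B)` because `u`
is positive on the first set and negative on the second.

Conversely, let `f₁, f₂` be bounded and let `B` be disjoint from `g^k(B)` with small complement.
Since `g^k` is injective and bimeasurable, the function `u` that equals `f₁` on `B` and
`f₂ ∘ g^{-k}` on `g^k(B)` is measurable and bounded; `u - f₁` and `u ∘ g^k - f₂` vanish on `B`, so both have
small `L^p` norm. Density of simple functions in `L^p` concludes.
-/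

open MeasureTheory Filter Set Topology ENNReal NNReal

noncomputable section

theorem MeasurableEmbedding.iterate {X : Type*} [MeasurableSpace X] {g : X → X}
    (hg : MeasurableEmbedding g) : ∀ n, MeasurableEmbedding g^[n]
  | 0 => MeasurableEmbedding.id
  | n + 1 => (hg.iterate n).comp hg

theorem CondStar.quasiMeasurePreserving {X : Type*} [MeasurableSpace X] {μ : Measure X}
    {g : X → X} (h : CondStar μ g) (hg : Measurable g) : Measure.QuasiMeasurePreserving g μ μ := by
  obtain ⟨c, hc, hcB⟩ := h
  refine ⟨hg, Measure.AbsolutelyContinuous.mk fun B hB hμB => ?_⟩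
  rw [Measure.map_apply hg hB]
  simpa [hμB, not_le.2 hc] using hcB B hB

theorem ENNReal.exists_pos_forall_lt_rpow_mul_lt {C a : ℝ≥0∞} (hC : C ≠ ⊤) (ha : 0 < a) {q : ℝ}
    (hq : 0 < q) : ∃ δ : ℝ, 0 < δ ∧ ∀ t < ENNReal.ofReal δ, t ^ q * C < a := by
  have hlim : Tendsto (fun t : ℝ≥0∞ => t ^ q * C) (𝓝 0) (𝓝 0) := by
    simpa [ENNReal.zero_rpow_of_pos hq] using
      ENNReal.Tendsto.mul_const ((ENNReal.continuous_rpow_const (y := q)).tendsto 0) (Or.inr hC)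
  obtain ⟨η, hη, hηa⟩ :=
    ENNReal.nhds_zero_basis.eventually_iff.1 (hlim.eventually (gt_mem_nhds ha))
  obtain ⟨δ, -, hδ, hδη⟩ := ENNReal.lt_iff_exists_real_btwn.1 hη
  exact ⟨δ, ENNReal.ofReal_pos.1 hδ, fun t ht => hηa (ht.trans hδη)⟩

theorem eLpNorm_le_of_eqOn_zero {X E : Type*} [MeasurableSpace X] [NormedAddCommGroup E]
    {μ : Measure X} {p : ℝ≥0∞} {F : X → E} {S : Set X} (hF : EqOn F 0 S) {C : ℝ}
    (hC : ∀ x, ‖F x‖ ≤ C) : eLpNorm F p μ ≤ μ Sᶜ ^ p.toReal⁻¹ * ENNReal.ofReal C := by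
  rw [← eLpNorm_restrict_eq_of_support_subset (s := Sᶜ) fun x hx hxS => hx (hF hxS)]
  simpa using eLpNorm_le_of_ae_bound (μ := μ.restrict Sᶜ) (p := p) (ae_of_all _ hC)

theorem exists_bounded_eqOn_and_comp_eqOn {X : Type*} [MeasurableSpace X] {G : X → X}
    (hG : MeasurableEmbedding G) {S : Set X} (hS : MeasurableSet S) (hSG : S ∩ G '' S = ∅)
    {f₁ f₂ : X → ℝ} (hf₁ : Measurable f₁) (hf₂ : Measurable f₂) {M : ℝ}
    (hM₁ : ∀ x, ‖f₁ x‖ ≤ M) (hM₂ : ∀ x, ‖f₂ x‖ ≤ M) :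
    ∃ u : X → ℝ, Measurable u ∧ (∀ x, ‖u x‖ ≤ M) ∧ EqOn u f₁ S ∧ EqOn (u ∘ G) f₂ S := by
  classical
  refine ⟨S.piecewise f₁ (Function.extend G f₂ f₁),
    hf₁.piecewise hS (hG.measurable_extend hf₂ hf₁), fun x => ?_,
    fun x hx => piecewise_eq_of_mem _ _ _ hx, fun x hx => ?_⟩
  · by_cases hx : x ∈ S
    · rw [piecewise_eq_of_mem _ _ _ hx]
      exact hM₁ x
    rw [piecewise_eq_of_notMem _ _ _ hx]
    by_cases hy : ∃ y, G y = x
    · obtain ⟨y, rfl⟩ := hy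
      rw [hG.injective.extend_apply]
      exact hM₂ y
    · rw [Function.extend_apply' _ _ _ hy]
      exact hM₁ x
  · have hGx : G x ∉ S := fun h => (hSG ▸ ⟨h, x, hx, rfl⟩ : G x ∈ (∅ : Set X))
    simp only [Function.comp_apply, piecewise_eq_of_notMem _ _ _ hGx,
      hG.injective.extend_apply]

section Lp

variable {X : Type*} [MeasurableSpace X] {μ : Measure X} {p : ℝ≥0∞}

theorem Lp.coeFn_iterate_ae_eq_comp {E : Type*} [NormedAddCommGroup E]
    {T : Lp E p μ → Lp E p μ} {g : X → X} (hg : Measure.QuasiMeasurePreserving g μ μ)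
    (hT : ∀ φ, ⇑(T φ) =ᵐ[μ] ⇑φ ∘ g) (k : ℕ) (φ : Lp E p μ) :
    ⇑(T^[k] φ) =ᵐ[μ] ⇑φ ∘ g^[k] := by
  induction k generalizing φ with
  | zero => rfl
  | succ k ih =>
    rw [Function.iterate_succ_apply, Function.iterate_succ']
    exact (ih (T φ)).trans ((hg.iterate k).ae_eq (hT φ))

variable [IsFiniteMeasure μ]

theorem Lp.exists_edist_le_of_inter_image_eq_empty (Φ : Lp ℝ p μ → Lp ℝ p μ) {G : X → X}
    (hG : MeasurableEmbedding G) (hGμ : Measure.QuasiMeasurePreserving G μ μ)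
    (hΦ : ∀ w, ⇑(Φ w) =ᵐ[μ] ⇑w ∘ G) {S : Set X} (hS : MeasurableSet S)
    (hSG : S ∩ G '' S = ∅) {φ₁ φ₂ : Lp ℝ p μ} {f₁ f₂ : X → ℝ} (hf₁ : Measurable f₁)
    (hf₂ : Measurable f₂) (hφ₁ : ⇑φ₁ =ᵐ[μ] f₁) (hφ₂ : ⇑φ₂ =ᵐ[μ] f₂) {M : ℝ}
    (hM₁ : ∀ x, ‖f₁ x‖ ≤ M) (hM₂ : ∀ x, ‖f₂ x‖ ≤ M) :
    ∃ w : Lp ℝ p μ, edist w φ₁ ≤ μ Sᶜ ^ p.toReal⁻¹ * ENNReal.ofReal (2 * M) ∧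
      edist (Φ w) φ₂ ≤ μ Sᶜ ^ p.toReal⁻¹ * ENNReal.ofReal (2 * M) := by
  obtain ⟨u, hu, huM, hu₁, hu₂⟩ :=
    exists_bounded_eqOn_and_comp_eqOn hG hS hSG hf₁ hf₂ hM₁ hM₂
  have huLp : MemLp u p μ := MemLp.of_bound hu.aestronglyMeasurable M (ae_of_all _ huM)
  have hw : ⇑(huLp.toLp u) =ᵐ[μ] u := huLp.coeFn_toLp
  refine ⟨huLp.toLp u, ?_, ?_⟩
  · rw [Lp.edist_def, eLpNorm_congr_ae (hw.sub hφ₁)]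
    refine eLpNorm_le_of_eqOn_zero (fun x hx => sub_eq_zero.2 (hu₁ hx)) fun x => ?_
    exact (norm_sub_le _ _).trans (by linarith [huM x, hM₁ x])
  · rw [Lp.edist_def, eLpNorm_congr_ae (((hΦ _).trans (hGμ.ae_eq hw)).sub hφ₂)]
    refine eLpNorm_le_of_eqOn_zero (fun x hx => sub_eq_zero.2 (hu₂ hx)) fun x => ?_
    exact (norm_sub_le (u (G x)) _).trans (by linarith [huM (G x), hM₂ x])

variable [Fact (1 ≤ p)]

theorem Lp.measure_one_le_abs_sub_le (hp : p ≠ ⊤) (f : Lp ℝ p μ) (c : ℝ) {F : X → ℝ}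
    (hF : F =ᵐ[μ] f) :
    μ {x | 1 ≤ |F x - c|} ≤ ENNReal.ofReal (dist f (Lp.const p μ c)) ^ p.toReal := by
  have hp0 : p ≠ 0 := (zero_lt_one.trans_le Fact.out).ne'
  have hdiff : (fun x => F x - c) =ᵐ[μ] ⇑f - ⇑(Lp.const p μ c) := by
    filter_upwards [hF, Lp.coeFn_const (p := p) (μ := μ) c] with x h₁ h₂
    simp only [Pi.sub_apply, h₁, h₂, Function.const_apply]
  have hmeas : AEStronglyMeasurable (fun x => F x - c) μ :=
    ((Lp.aestronglyMeasurable f).sub (Lp.aestronglyMeasurable _)).congr hdiff.symm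
  calc μ {x | 1 ≤ |F x - c|} = μ {x | 1 ≤ ‖F x - c‖ₑ} := by
        simp only [Real.enorm_eq_ofReal_abs, ENNReal.one_le_ofReal]
    _ ≤ 1⁻¹ ^ p.toReal * eLpNorm (fun x => F x - c) p μ ^ p.toReal :=
        meas_ge_le_mul_pow_eLpNorm_enorm μ hp0 hp hmeas one_ne_zero (by simp)
    _ = ENNReal.ofReal (dist f (Lp.const p μ c)) ^ p.toReal := by
        rw [eLpNorm_congr_ae hdiff, ← Lp.edist_def, edist_dist, inv_one, ENNReal.one_rpow, one_mul]

theorem Lp.exists_measurableSet_inter_image_eq_empty (hp : p ≠ ⊤) {G : X → X}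
    (hG : Measurable G) (u v : Lp ℝ p μ) (hv : ⇑v =ᵐ[μ] ⇑u ∘ G) :
    ∃ S, MeasurableSet S ∧ S ∩ G '' S = ∅ ∧
      μ Sᶜ ≤ ENNReal.ofReal (dist u (Lp.const p μ 1)) ^ p.toReal +
        ENNReal.ofReal (dist v (Lp.const p μ (-1))) ^ p.toReal := by
  have hu : Measurable u := (Lp.stronglyMeasurable u).measurable
  refine ⟨{x | 0 < u x} ∩ G ⁻¹' {x | u x < 0},
    (measurableSet_lt measurable_const hu).inter (hG (measurableSet_lt hu measurable_const)),
    ?_, ?_⟩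
  · rw [eq_empty_iff_forall_notMem]
    rintro _ ⟨⟨hpos, -⟩, y, ⟨-, hneg⟩, rfl⟩
    exact lt_asymm hpos (show u (G y) < 0 from hneg)
  · have hsub : ({x | 0 < u x} ∩ G ⁻¹' {x | u x < 0})ᶜ ⊆
        {x | 1 ≤ |u x - 1|} ∪ {x | 1 ≤ |(⇑u ∘ G) x - (-1)|} := by
      intro x hx
      simp only [mem_compl_iff, mem_inter_iff, mem_ofPred_eq, mem_preimage, not_and_or, not_lt,
        mem_union, Function.comp_apply] at hx ⊢
      rcases hx with hx | hx
      · exact Or.inl ((neg_le_abs _).trans' (by linarith))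
      · exact Or.inr ((le_abs_self _).trans' (by linarith))
    exact (measure_mono hsub).trans ((measure_union_le _ _).trans (add_le_add
      (measure_one_le_abs_sub_le hp u 1 .rfl) (measure_one_le_abs_sub_le hp v (-1) hv.symm)))

theorem Lp.exists_sets_inter_image_iterate_eq_empty_of_topMixing (hp : p ≠ ⊤) {g : X → X}
    (hg : Measurable g) {T : Lp ℝ p μ → Lp ℝ p μ}
    (hT : ∀ k φ, ⇑(T^[k] φ) =ᵐ[μ] ⇑φ ∘ g^[k]) (hmix : TopMixing T) (ε : ℝ) (hε : 0 < ε) :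
    ∃ k₀ : ℕ, 1 ≤ k₀ ∧ ∃ B : ℕ → Set X,
      ∀ k, k₀ ≤ k → MeasurableSet (B k) ∧ μ (univ \ B k) < ENNReal.ofReal ε ∧
        B k ∩ g^[k] '' (B k) = ∅ := by
  have hr : 0 < p.toReal := ENNReal.toReal_pos (zero_lt_one.trans_le Fact.out).ne' hp
  obtain ⟨δ, hδ, hδε⟩ :=
    ENNReal.exists_pos_forall_lt_rpow_mul_lt one_ne_top (ofReal_pos.2 (half_pos hε)) hr
  have hsmall : ∀ {φ ψ : Lp ℝ p μ}, dist φ ψ < δ →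
      ENNReal.ofReal (dist φ ψ) ^ p.toReal < ENNReal.ofReal (ε / 2) := fun h => by
    simpa using hδε _ ((ENNReal.ofReal_lt_ofReal_iff hδ).2 h)
  obtain ⟨k₀, hk₀, hmixk⟩ := hmix (Metric.ball (Lp.const p μ 1) δ)
    (Metric.ball (Lp.const p μ (-1)) δ) Metric.isOpen_ball Metric.isOpen_ball
    (Metric.nonempty_ball.2 hδ) (Metric.nonempty_ball.2 hδ)
  have hsep : ∀ k, k₀ ≤ k → ∃ S, MeasurableSet S ∧ μ (univ \ S) < ENNReal.ofReal ε ∧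
      S ∩ g^[k] '' S = ∅ := by
    intro k hk
    obtain ⟨_, ⟨u, hu, rfl⟩, hTu⟩ := hmixk k hk
    obtain ⟨S, hS, hSg, hSμ⟩ :=
      exists_measurableSet_inter_image_eq_empty hp (hg.iterate k) u _ (hT k u)
    refine ⟨S, hS, ?_, hSg⟩
    calc μ (univ \ S) = μ Sᶜ := by rw [compl_eq_univ_sdiff]
      _ < ENNReal.ofReal (ε / 2) + ENNReal.ofReal (ε / 2) :=
        hSμ.trans_lt (ENNReal.add_lt_add (hsmall hu) (hsmall hTu))
      _ = ENNReal.ofReal ε := by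
        rw [← ENNReal.ofReal_add (by positivity) (by positivity), add_halves]
  choose! B hB using hsep
  exact ⟨k₀, hk₀, B, hB⟩

theorem Lp.topMixing_of_forall_exists_sets_inter_image_iterate_eq_empty (hp : p ≠ ⊤)
    {g : X → X} (hg : MeasurableEmbedding g) (hgμ : Measure.QuasiMeasurePreserving g μ μ)
    {T : Lp ℝ p μ → Lp ℝ p μ} (hT : ∀ k φ, ⇑(T^[k] φ) =ᵐ[μ] ⇑φ ∘ g^[k])
    (hcond : ∀ ε : ℝ, 0 < ε → ∃ k₀ : ℕ, 1 ≤ k₀ ∧ ∃ B : ℕ → Set X,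
      ∀ k, k₀ ≤ k → MeasurableSet (B k) ∧ μ (univ \ B k) < ENNReal.ofReal ε ∧
        B k ∩ g^[k] '' (B k) = ∅) :
    TopMixing T := by
  intro U V hU hV hUne hVne
  have hr : 0 < p.toReal := ENNReal.toReal_pos (zero_lt_one.trans_le Fact.out).ne' hp
  have hdense := Lp.simpleFunc.denseRange (E := ℝ) (μ := μ) hp
  obtain ⟨s₁, hs₁⟩ := hdense.exists_mem_open hU hUne
  obtain ⟨s₂, hs₂⟩ := hdense.exists_mem_open hV hVne
  obtain ⟨δ₁, hδ₁, hU₁⟩ := Metric.isOpen_iff.1 hU _ hs₁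
  obtain ⟨δ₂, hδ₂, hV₂⟩ := Metric.isOpen_iff.1 hV _ hs₂
  obtain ⟨M₁, hM₁⟩ := (Lp.simpleFunc.toSimpleFunc s₁).exists_forall_norm_le
  obtain ⟨M₂, hM₂⟩ := (Lp.simpleFunc.toSimpleFunc s₂).exists_forall_norm_le
  obtain ⟨ε, hε, hεδ⟩ := ENNReal.exists_pos_forall_lt_rpow_mul_lt
    (C := ENNReal.ofReal (2 * max M₁ M₂)) ofReal_ne_top (ofReal_pos.2 (lt_min hδ₁ hδ₂))
    (inv_pos.2 hr)
  obtain ⟨k₀, hk₀, B, hB⟩ := hcond ε hε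
  refine ⟨k₀, hk₀, fun k hk => ?_⟩
  obtain ⟨hBm, hBμ, hBg⟩ := hB k hk
  obtain ⟨w, hw₁, hw₂⟩ := exists_edist_le_of_inter_image_eq_empty T^[k] (hg.iterate k)
    (hgμ.iterate k) (hT k) hBm hBg (SimpleFunc.measurable _) (SimpleFunc.measurable _)
    (Lp.simpleFunc.toSimpleFunc_eq_toFun s₁).symm (Lp.simpleFunc.toSimpleFunc_eq_toFun s₂).symm
    (fun x => (hM₁ x).trans (le_max_left _ _)) (fun x => (hM₂ x).trans (le_max_right _ _))
  rw [← compl_eq_univ_sdiff] at hBμ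
  have hclose : ∀ {φ ψ : Lp ℝ p μ},
      edist φ ψ ≤ μ (B k)ᶜ ^ p.toReal⁻¹ * ENNReal.ofReal (2 * max M₁ M₂) →
      dist φ ψ < min δ₁ δ₂ := fun h => edist_lt_ofReal.1 (h.trans_lt (hεδ _ hBμ))
  exact ⟨_, mem_image_of_mem _ (hU₁ ((hclose hw₁).trans_le (min_le_left _ _))),
    hV₂ ((hclose hw₂).trans_le (min_le_right _ _))⟩

end Lp

/-- Mixing characterization for composition operators on a finite measure space
(Theorem of Bayart–Darji–Pires). -/
theorem compositionOperator_mixing_iff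
    {X : Type*} [MeasurableSpace X]
    (μ : Measure X) [IsFiniteMeasure μ]
    (g : X → X) (hg_inj : Function.Injective g) (hg_meas : Measurable g)
    (hg_bimeas : ∀ B : Set X, MeasurableSet B → MeasurableSet (g '' B))
    (hstar : CondStar μ g)
    (p : ENNReal) [Fact (1 ≤ p)] (hp' : p ≠ ⊤)
    (T : Lp ℝ p μ →L[ℝ] Lp ℝ p μ)
    (hT : ∀ φ : Lp ℝ p μ, ⇑(T φ) =ᵐ[μ] (⇑φ ∘ g)) :
    TopMixing ⇑T ↔
      ∀ ε : ℝ, 0 < ε → ∃ k₀ : ℕ, 1 ≤ k₀ ∧ ∃ B : ℕ → Set X,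
        ∀ k, k₀ ≤ k → MeasurableSet (B k) ∧ μ (univ \ B k) < ENNReal.ofReal ε ∧
          B k ∩ g^[k] '' (B k) = ∅ := by
  have hg_qmp := hstar.quasiMeasurePreserving hg_meas
  have hTk := Lp.coeFn_iterate_ae_eq_comp hg_qmp hT
  exact ⟨Lp.exists_sets_inter_image_iterate_eq_empty_of_topMixing hp' hg_meas hTk,
    Lp.topMixing_of_forall_exists_sets_inter_image_iterate_eq_empty hp'
      ⟨hg_inj, hg_meas, fun _ hs => hg_bimeas _ hs⟩ hg_qmp hTk⟩
end
end
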